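/- For any w ∈ S_n, the set U_w = R_w · B is invariant under left multiplication by N_0, the group of upper triangular unipotent matrices with entries in o_F. -/

import Mathlib

open Matrix

variable (p : ℕ) [Fact p.Prime] (F : Type) [Field F] [Algebra ℚ_[p] F]
  [FiniteDimensional ℚ_[p] F] [Algebra ℤ_[p] F] [IsScalarTower ℤ_[p] ℚ_[p] F]

/-- The ring of integers `o_F` of the finite extension `F` of `ℚ_p`. -/
def oF : Set F := {x | x ∈ integralClosure ℤ_[p] F}

/-- The ideal `π_F o_F` of `o_F`, as a subset of `F`. -/
def piO (π : F) : Set F := {x | ∃ c ∈ oF p F, x = π * c}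

/-- The permutation matrix of `w`, with `w_{ij} = 1` iff `w(j) = i`. -/
def permMat (n : ℕ) (w : Equiv.Perm (Fin n)) : Matrix (Fin n) (Fin n) F :=
  fun i j => if w j = i then 1 else 0

/-- `R_w`: the set of matrices `(a_{ij})` with `a_{ij} = 1` if `w⁻¹(i) = j`,
`a_{ij} = 0` if `w⁻¹(i) < j`, `a_{ij} ∈ o_F` if `w⁻¹(i) > j` and `w(j) > i`, and
`a_{ij} ∈ π_F o_F` if `w⁻¹(i) > j` and `w(j) < i`. -/
def Rw (π : F) (n : ℕ) (w : Equiv.Perm (Fin n)) : Set (Matrix (Fin n) (Fin n) F) :=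
  {a | ∀ i j : Fin n,
    (w⁻¹ i = j → a i j = 1) ∧
    (w⁻¹ i < j → a i j = 0) ∧
    (j < w⁻¹ i → i < w j → a i j ∈ oF p F) ∧
    (j < w⁻¹ i → w j < i → a i j ∈ piO p F π)}

/-- invertible upper triangular matrix (an element of the Borel `B`). -/
def IsBorel {n : ℕ} (b : Matrix (Fin n) (Fin n) F) : Prop :=
  (∀ i j : Fin n, j < i → b i j = 0) ∧ (∀ i : Fin n, b i i ≠ 0)

/-- membership in `N₀`: upper triangular unipotent with entries in `o_F`. -/
def IsN0 {n : ℕ} (m : Matrix (Fin n) (Fin n) F) : Prop :=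
  (∀ i : Fin n, m i i = 1) ∧ (∀ i j : Fin n, j < i → m i j = 0) ∧
  (∀ i j : Fin n, m i j ∈ oF p F)

/-!
Put `g = n₀ r`. As `n₀` is upper unipotent with integral entries, `g ≡ r (mod π)` on and below the
pivots `(w m, m)`, so `g` satisfies the congruences cutting out `R_w`: integral entries, entries
below the pivots in `π o_F`, pivots in `1 + π o_F`. Such a `g` is moved into `R_w` by an element
`b₀ ∈ B`: for `m = 0, 1, …, n - 1` in turn, divide column `m` by its pivot (a unit of `o_F`,
because `π` is a uniformizer) and subtract multiples of it from the later columns so as to clear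
row `w m` right of the pivot. These column operations preserve the congruences and the rows cleared
before. Finally `n₀ r b = (g b₀) (b₀⁻¹ b) ∈ R_w B`.
-/

section Borel

variable {F} {n : ℕ}

theorem isBorel_iff {b : Matrix (Fin n) (Fin n) F} :
    IsBorel F b ↔ b.IsUpperTriangular ∧ b.det ≠ 0 := by
  refine ⟨fun hb => ⟨fun i j h => hb.1 i j h, ?_⟩, fun hb => ⟨fun i j h => hb.1 h, ?_⟩⟩
  · rw [det_of_isUpperTriangular fun i j h => hb.1 i j h, Finset.prod_ne_zero_iff]
    exact fun i _ => hb.2 i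
  · rw [det_of_isUpperTriangular hb.1, Finset.prod_ne_zero_iff] at hb
    exact fun i => hb.2 i (Finset.mem_univ i)

theorem IsBorel.one : IsBorel F (1 : Matrix (Fin n) (Fin n) F) :=
  isBorel_iff.2 ⟨blockTriangular_one, by simp⟩

theorem IsBorel.mul {b c : Matrix (Fin n) (Fin n) F} (hb : IsBorel F b) (hc : IsBorel F c) :
    IsBorel F (b * c) := by
  rw [isBorel_iff] at *
  exact ⟨hb.1.mul hc.1, by rw [det_mul]; exact mul_ne_zero hb.2 hc.2⟩

theorem IsBorel.isUnit_det {b : Matrix (Fin n) (Fin n) F} (hb : IsBorel F b) : IsUnit b.det :=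
  isUnit_iff_ne_zero.2 (isBorel_iff.1 hb).2

theorem IsBorel.inv {b : Matrix (Fin n) (Fin n) F} (hb : IsBorel F b) : IsBorel F b⁻¹ := by
  have := b.invertibleOfIsUnitDet hb.isUnit_det
  rw [isBorel_iff] at *
  refine ⟨blockTriangular_inv_of_blockTriangular hb.1, ?_⟩
  rw [det_nonsing_inv, Ring.inverse_eq_inv']
  exact inv_ne_zero hb.2

theorem isBorel_one_add_vecMulVec_single {j : Fin n} {c : Fin n → F} (hc : ∀ m < j, c m = 0)
    (hcj : 1 + c j ≠ 0) : IsBorel F (1 + vecMulVec (Pi.single j 1) c) := by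
  refine ⟨fun i m hmi => ?_, fun i => ?_⟩
  · rcases eq_or_ne i j with rfl | hij
    · simp [vecMulVec_apply, one_apply_ne hmi.ne', hc m hmi]
    · simp [vecMulVec_apply, one_apply_ne hmi.ne', hij]
  · rcases eq_or_ne i j with rfl | hij
    · simpa [vecMulVec_apply] using hcj
    · simp [vecMulVec_apply, hij]

end Borel

theorem Matrix.mul_one_add_vecMulVec_single_apply {ι R : Type*} [Fintype ι] [DecidableEq ι]
    [Semiring R] (g : Matrix ι ι R) (j : ι) (c : ι → R) (i m : ι) :
    (g * (1 + vecMulVec (Pi.single j 1) c)) i m = g i m + g i j * c m := by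
  rw [Matrix.mul_add, mul_one, add_apply, mul_vecMulVec, mulVec_single_one, vecMulVec_apply]
  rfl

section IntegerRing

omit [Algebra ℚ_[p] F] [FiniteDimensional ℚ_[p] F] [IsScalarTower ℤ_[p] ℚ_[p] F]

variable {p F} {π : F}

theorem zero_mem_oF : (0 : F) ∈ oF p F := (integralClosure ℤ_[p] F).zero_mem

theorem one_mem_oF : (1 : F) ∈ oF p F := (integralClosure ℤ_[p] F).one_mem

theorem add_mem_oF {a b : F} (ha : a ∈ oF p F) (hb : b ∈ oF p F) : a + b ∈ oF p F :=
  (integralClosure ℤ_[p] F).add_mem ha hb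

theorem mul_mem_oF {a b : F} (ha : a ∈ oF p F) (hb : b ∈ oF p F) : a * b ∈ oF p F :=
  (integralClosure ℤ_[p] F).mul_mem ha hb

theorem neg_mem_oF {a : F} (ha : a ∈ oF p F) : -a ∈ oF p F :=
  (integralClosure ℤ_[p] F).neg_mem ha

theorem sub_mem_oF {a b : F} (ha : a ∈ oF p F) (hb : b ∈ oF p F) : a - b ∈ oF p F :=
  (integralClosure ℤ_[p] F).sub_mem ha hb

theorem pow_mem_oF {a : F} (ha : a ∈ oF p F) (k : ℕ) : a ^ k ∈ oF p F :=
  (integralClosure ℤ_[p] F).pow_mem ha k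

theorem sum_mem_oF {ι : Type*} {s : Finset ι} {f : ι → F} (h : ∀ i ∈ s, f i ∈ oF p F) :
    ∑ i ∈ s, f i ∈ oF p F :=
  (integralClosure ℤ_[p] F).sum_mem h

theorem zero_mem_piO : (0 : F) ∈ piO p F π := ⟨0, zero_mem_oF, (mul_zero π).symm⟩

theorem add_mem_piO {a b : F} (ha : a ∈ piO p F π) (hb : b ∈ piO p F π) : a + b ∈ piO p F π := by
  obtain ⟨c, hc, rfl⟩ := ha
  obtain ⟨d, hd, rfl⟩ := hb
  exact ⟨c + d, add_mem_oF hc hd, (mul_add π c d).symm⟩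

theorem neg_mem_piO {a : F} (ha : a ∈ piO p F π) : -a ∈ piO p F π := by
  obtain ⟨c, hc, rfl⟩ := ha
  exact ⟨-c, neg_mem_oF hc, (mul_neg π c).symm⟩

theorem mul_mem_piO_left {a x : F} (ha : a ∈ oF p F) (hx : x ∈ piO p F π) :
    a * x ∈ piO p F π := by
  obtain ⟨c, hc, rfl⟩ := hx
  exact ⟨a * c, mul_mem_oF ha hc, mul_left_comm a π c⟩

theorem mul_mem_piO_right {a x : F} (hx : x ∈ piO p F π) (ha : a ∈ oF p F) :
    x * a ∈ piO p F π :=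
  mul_comm a x ▸ mul_mem_piO_left ha hx

theorem sum_mem_piO {ι : Type*} {s : Finset ι} {f : ι → F} (h : ∀ i ∈ s, f i ∈ piO p F π) :
    ∑ i ∈ s, f i ∈ piO p F π :=
  Finset.sum_induction f (· ∈ piO p F π) (fun _ _ => add_mem_piO) zero_mem_piO h

theorem mem_oF_of_mem_piO (hπ : π ∈ oF p F) {x : F} (hx : x ∈ piO p F π) : x ∈ oF p F := by
  obtain ⟨c, hc, rfl⟩ := hx
  exact mul_mem_oF hπ hc

theorem zpow_mem_oF (hπ : π ∈ oF p F) (hπ' : π⁻¹ ∈ oF p F) (m : ℤ) : π ^ m ∈ oF p F := by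
  rcases m with k | k
  · simpa using pow_mem_oF hπ k
  · simpa [zpow_negSucc, ← inv_pow] using pow_mem_oF hπ' (k + 1)

theorem ne_zero_and_inv_mem_oF_of_sub_one_mem_piO (hπ : π ∈ oF p F) (hπ' : π⁻¹ ∉ oF p F)
    (hunif : ∀ x : F, x ≠ 0 →
      ∃ (m : ℤ) (u : F), u ∈ oF p F ∧ u⁻¹ ∈ oF p F ∧ x = u * π ^ m)
    {x : F} (hx : x - 1 ∈ piO p F π) : x ≠ 0 ∧ x⁻¹ ∈ oF p F := by
  have hπ0 : π ≠ 0 := by rintro rfl; exact hπ' (by simpa using zero_mem_oF)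
  have hπ_nonunit : ∀ y ∈ oF p F, π * y ≠ 1 := fun y hy h =>
    hπ' (eq_inv_of_mul_eq_one_right h ▸ hy)
  obtain ⟨a, ha, hxa⟩ := hx
  have hx0 : x ≠ 0 := by
    rintro rfl
    exact hπ_nonunit (-a) (neg_mem_oF ha) (by linear_combination hxa)
  refine ⟨hx0, ?_⟩
  obtain ⟨m, u, hu, hu', rfl⟩ := hunif x hx0
  rcases le_or_gt m 0 with hm | hm
  · lift -m to ℕ using neg_nonneg.2 hm with k hk
    rw [mul_inv, ← _root_.zpow_neg, ← hk, zpow_natCast]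
    exact mul_mem_oF hu' (pow_mem_oF hπ k)
  · -- `m > 0` would make `1 = x - π a` divisible by `π`
    lift m - 1 to ℕ using by omega with k hk
    obtain rfl : m = k + 1 := by omega
    rw [zpow_add₀ hπ0, zpow_natCast, zpow_one] at hxa
    exact absurd (by linear_combination hxa)
      (hπ_nonunit _ (sub_mem_oF (mul_mem_oF hu (pow_mem_oF hπ k)) ha))

end IntegerRing

section Elimination

omit [Algebra ℚ_[p] F] [FiniteDimensional ℚ_[p] F] [IsScalarTower ℤ_[p] ℚ_[p] F]

variable {p F} {π : F} {n : ℕ} {w : Equiv.Perm (Fin n)}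

variable (p) in
/-- The congruences modulo `π` satisfied by the elements of `R_w`; the pivot of column `m`
is the entry `(w m, m)`. -/
structure IsRwCongruent (π : F) (w : Equiv.Perm (Fin n)) (g : Matrix (Fin n) (Fin n) F) :
    Prop where
  integral : ∀ i m, g i m ∈ oF p F
  below_pivot : ∀ i m, w m < i → g i m ∈ piO p F π
  pivot : ∀ m, g (w m) m - 1 ∈ piO p F π

def PivotRowsCleared (w : Equiv.Perm (Fin n)) (k : ℕ) (g : Matrix (Fin n) (Fin n) F) : Prop :=
  ∀ m : Fin n, (m : ℕ) < k → g (w m) m = 1 ∧ ∀ m', m < m' → g (w m) m' = 0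

theorem isRwCongruent_of_mem_Rw (hπ : π ∈ oF p F) {r : Matrix (Fin n) (Fin n) F}
    (hr : r ∈ Rw p F π n w) : IsRwCongruent p π w r := by
  have hpivot : ∀ m, r (w m) m = 1 := fun m => (hr (w m) m).1 (by simp)
  refine ⟨fun i m => ?_, fun i m him => ?_, fun m => by simpa [hpivot m] using zero_mem_piO⟩
  · rcases lt_trichotomy (w⁻¹ i) m with h | h | h
    · simpa [(hr i m).2.1 h] using zero_mem_oF
    · simpa [(hr i m).1 h] using one_mem_oF
    · rcases lt_or_gt_of_ne (show i ≠ w m by rintro rfl; simp at h) with h' | h'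
      · exact (hr i m).2.2.1 h h'
      · exact mem_oF_of_mem_piO hπ ((hr i m).2.2.2 h h')
  · rcases lt_trichotomy (w⁻¹ i) m with h | h | h
    · simpa [(hr i m).2.1 h] using zero_mem_piO
    · rw [Equiv.Perm.inv_eq_iff_eq] at h
      exact absurd h him.ne'
    · exact (hr i m).2.2.2 h him

theorem mem_Rw_of_pivotRowsCleared {g : Matrix (Fin n) (Fin n) F}
    (hg : IsRwCongruent p π w g) (hcl : PivotRowsCleared w n g) : g ∈ Rw p F π n w := by
  intro i m
  refine ⟨fun h => ?_, fun h => ?_, fun _ _ => hg.integral i m, fun _ h => hg.below_pivot i m h⟩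
  · rw [Equiv.Perm.inv_eq_iff_eq] at h
    exact h ▸ (hcl m m.isLt).1
  · simpa using (hcl (w⁻¹ i) (w⁻¹ i).isLt).2 m h

theorem IsRwCongruent.isN0_mul {g n₀ : Matrix (Fin n) (Fin n) F} (hg : IsRwCongruent p π w g)
    (hn₀ : IsN0 p F n₀) : IsRwCongruent p π w (n₀ * g) := by
  obtain ⟨hdiag, hlower, hint⟩ := hn₀
  -- `n₀ - 1` is strictly upper triangular, so it only sees entries of `g` strictly below row `i`
  have hcong : ∀ i m, w m ≤ i → (n₀ * g) i m - g i m ∈ piO p F π := by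
    intro i m him
    rw [show (n₀ * g) i m - g i m = ((n₀ - 1) * g) i m by rw [sub_mul, one_mul, Matrix.sub_apply],
      mul_apply]
    refine sum_mem_piO fun t _ => ?_
    rcases lt_trichotomy t i with hti | rfl | hti
    · simpa [hlower i t hti, one_apply_ne hti.ne'] using zero_mem_piO
    · simpa [hdiag t] using zero_mem_piO
    · exact mul_mem_piO_left (sub_mem_oF (hint i t) (by simp [one_apply_ne hti.ne, zero_mem_oF]))
        (hg.below_pivot t m (him.trans_lt hti))
  refine ⟨fun i m => ?_, fun i m him => ?_, fun m => ?_⟩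
  · rw [mul_apply]
    exact sum_mem_oF fun t _ => mul_mem_oF (hint i t) (hg.integral t m)
  · simpa using add_mem_piO (hcong i m him.le) (hg.below_pivot i m him)
  · simpa using add_mem_piO (hcong (w m) m le_rfl) (hg.pivot m)

theorem IsRwCongruent.mul_one_add_vecMulVec_single {g : Matrix (Fin n) (Fin n) F} {j : Fin n}
    {c : Fin n → F} (hg : IsRwCongruent p π w g) (hc : ∀ m, c m ∈ oF p F)
    (hcπ : ∀ m, w m ≤ w j → c m ∈ piO p F π) :
    IsRwCongruent p π w (g * (1 + vecMulVec (Pi.single j 1) c)) := by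
  -- `g i j * c m ∈ π o_F` as soon as `w m ≤ i`: either `w j < i` or `w m ≤ i ≤ w j`
  have hcorr : ∀ i m, w m ≤ i → g i j * c m ∈ piO p F π := fun i m him => by
    rcases lt_or_ge (w j) i with hji | hij
    · exact mul_mem_piO_right (hg.below_pivot i j hji) (hc m)
    · exact mul_mem_piO_left (hg.integral i j) (hcπ m (him.trans hij))
  refine ⟨fun i m => ?_, fun i m him => ?_, fun m => ?_⟩ <;>
    rw [mul_one_add_vecMulVec_single_apply]
  · exact add_mem_oF (hg.integral i m) (mul_mem_oF (hg.integral i j) (hc m))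
  · exact add_mem_piO (hg.below_pivot i m him) (hcorr i m him.le)
  rw [add_sub_right_comm]
  exact add_mem_piO (hg.pivot m) (hcorr (w m) m le_rfl)

def clearingCoeffs (g : Matrix (Fin n) (Fin n) F) (i j : Fin n) (m : Fin n) : F :=
  if j ≤ m then (g i j)⁻¹ * ((Pi.single j 1 : Fin n → F) m - g i m) else 0

theorem clearingCoeffs_of_lt {g : Matrix (Fin n) (Fin n) F} {i j m : Fin n} (hm : m < j) :
    clearingCoeffs g i j m = 0 :=
  if_neg hm.not_ge

theorem one_add_clearingCoeffs_self {g : Matrix (Fin n) (Fin n) F} {i j : Fin n}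
    (hp : g i j ≠ 0) : 1 + clearingCoeffs g i j j = (g i j)⁻¹ := by
  simp only [clearingCoeffs, le_refl, if_true, Pi.single_eq_same]
  field_simp
  ring

theorem mul_clearingCoeffs_apply_row {g : Matrix (Fin n) (Fin n) F} {i j m : Fin n}
    (hp : g i j ≠ 0) (hm : j ≤ m) :
    (g * (1 + vecMulVec (Pi.single j 1) (clearingCoeffs g i j))) i m =
      (Pi.single j 1 : Fin n → F) m := by
  rw [mul_one_add_vecMulVec_single_apply, clearingCoeffs, if_pos hm]
  field_simp
  ring

theorem IsRwCongruent.clearingCoeffs_mem_oF {g : Matrix (Fin n) (Fin n) F} {j : Fin n}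
    (hg : IsRwCongruent p π w g) (hq : (g (w j) j)⁻¹ ∈ oF p F) (m : Fin n) :
    clearingCoeffs g (w j) j m ∈ oF p F := by
  unfold clearingCoeffs
  split_ifs
  · refine mul_mem_oF hq (sub_mem_oF ?_ (hg.integral _ _))
    rcases eq_or_ne m j with rfl | hmj
    · simpa using one_mem_oF
    · simpa [Pi.single_apply, hmj] using zero_mem_oF
  · exact zero_mem_oF

theorem IsRwCongruent.clearingCoeffs_mem_piO {g : Matrix (Fin n) (Fin n) F} {j m : Fin n}
    (hg : IsRwCongruent p π w g) (hq : (g (w j) j)⁻¹ ∈ oF p F) (hm : w m ≤ w j) :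
    clearingCoeffs g (w j) j m ∈ piO p F π := by
  rcases hm.lt_or_eq with hm | hm
  · unfold clearingCoeffs
    split_ifs
    · have hmj : m ≠ j := fun h => hm.ne (h ▸ rfl)
      simpa [Pi.single_apply, hmj] using mul_mem_piO_left hq (neg_mem_piO (hg.below_pivot _ _ hm))
    · exact zero_mem_piO
  · obtain rfl := w.injective hm
    simpa [clearingCoeffs] using mul_mem_piO_left hq (neg_mem_piO (hg.pivot m))

theorem PivotRowsCleared.mul_clearingCoeffs {g : Matrix (Fin n) (Fin n) F} {j : Fin n}
    (hcl : PivotRowsCleared w j g) (hp : g (w j) j ≠ 0) :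
    PivotRowsCleared w (j + 1)
      (g * (1 + vecMulVec (Pi.single j 1) (clearingCoeffs g (w j) j))) := by
  intro m hm
  rcases Nat.lt_succ_iff_lt_or_eq.1 hm with hmj | hmj
  · have hzero : g (w m) j = 0 := (hcl m hmj).2 j hmj
    simp only [mul_one_add_vecMulVec_single_apply, hzero, zero_mul, add_zero]
    exact hcl m hmj
  · obtain rfl := Fin.ext hmj
    refine ⟨?_, fun m' hm' => ?_⟩
    · simpa using mul_clearingCoeffs_apply_row hp le_rfl
    · simpa [Pi.single_apply, hm'.ne'] using mul_clearingCoeffs_apply_row hp hm'.le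

theorem exists_isBorel_pivotRowsCleared
    (hunit : ∀ x : F, x - 1 ∈ piO p F π → x ≠ 0 ∧ x⁻¹ ∈ oF p F)
    {g : Matrix (Fin n) (Fin n) F} (hg : IsRwCongruent p π w g) :
    ∀ k ≤ n, ∃ b, IsBorel F b ∧ IsRwCongruent p π w (g * b) ∧ PivotRowsCleared w k (g * b)
  | 0, _ => ⟨1, .one, by simpa using hg, fun _ h => absurd h (Nat.not_lt_zero _)⟩
  | k + 1, hk => by
    obtain ⟨b, hb, hgb, hcl⟩ := exists_isBorel_pivotRowsCleared hunit hg k (Nat.le_of_succ_le hk)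
    set j : Fin n := ⟨k, hk⟩
    obtain ⟨hp, hq⟩ := hunit _ (hgb.pivot j)
    refine ⟨b * (1 + vecMulVec (Pi.single j 1) (clearingCoeffs (g * b) (w j) j)), ?_, ?_, ?_⟩
    · refine hb.mul (isBorel_one_add_vecMulVec_single (fun m hm => clearingCoeffs_of_lt hm) ?_)
      rw [one_add_clearingCoeffs_self hp]
      exact inv_ne_zero hp
    · rw [← mul_assoc]
      exact hgb.mul_one_add_vecMulVec_single (hgb.clearingCoeffs_mem_oF hq)
        fun m hm => hgb.clearingCoeffs_mem_piO hq hm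
    · rw [← mul_assoc]
      exact hcl.mul_clearingCoeffs hp

theorem IsRwCongruent.exists_isBorel_mul_mem_Rw
    (hunit : ∀ x : F, x - 1 ∈ piO p F π → x ≠ 0 ∧ x⁻¹ ∈ oF p F)
    {g : Matrix (Fin n) (Fin n) F} (hg : IsRwCongruent p π w g) :
    ∃ b, IsBorel F b ∧ g * b ∈ Rw p F π n w := by
  obtain ⟨b, hb, hgb, hcl⟩ := exists_isBorel_pivotRowsCleared hunit hg n le_rfl
  exact ⟨b, hb, mem_Rw_of_pivotRowsCleared hgb hcl⟩

end Elimination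

omit [FiniteDimensional ℚ_[p] F] in
theorem norm_le_one_of_algebraMap_mem_oF {x : ℚ_[p]} (hx : algebraMap ℚ_[p] F x ∈ oF p F) :
    ‖x‖ ≤ 1 := by
  obtain ⟨z, rfl⟩ := IsIntegrallyClosed.isIntegral_iff.mp
    ((isIntegral_algebraMap_iff (algebraMap ℚ_[p] F).injective).mp hx)
  exact z.norm_le_one

omit [FiniteDimensional ℚ_[p] F] in
theorem inv_natCast_not_mem_oF : (p : F)⁻¹ ∉ oF p F := fun h => by
  have := norm_le_one_of_algebraMap_mem_oF p F (x := (p : ℚ_[p])⁻¹) (by simpa using h)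
  rw [norm_inv, Padic.norm_p, inv_inv] at this
  exact (Nat.one_lt_cast.2 (Fact.out : p.Prime).one_lt).not_ge this

omit [FiniteDimensional ℚ_[p] F] in
theorem inv_not_mem_oF_of_unit_mul_zpow {π : F} (hπ : π ∈ oF p F)
    (hunif : ∀ x : F, x ≠ 0 →
      ∃ (m : ℤ) (u : F), u ∈ oF p F ∧ u⁻¹ ∈ oF p F ∧ x = u * π ^ m) :
    π⁻¹ ∉ oF p F := fun hπ' => by
  have hp0 : (p : F) ≠ 0 := by
    rw [← map_natCast (algebraMap ℚ_[p] F), map_ne_zero]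
    exact_mod_cast (Fact.out : p.Prime).ne_zero
  obtain ⟨m, u, -, hu', hp⟩ := hunif p hp0
  apply inv_natCast_not_mem_oF p F
  rw [hp, mul_inv, ← _root_.zpow_neg]
  exact mul_mem_oF hu' (zpow_mem_oF hπ hπ' (-m))

/-- for any `w ∈ Sₙ`, the set `U_w = R_w · B` is invariant under
left multiplication by `N₀`. -/
theorem stmt11 (n : ℕ) (π : F) (hπ : π ∈ oF p F)
    (hunif : ∀ x : F, x ≠ 0 →
      ∃ (m : ℤ) (u : F), u ∈ oF p F ∧ u⁻¹ ∈ oF p F ∧ x = u * π ^ m)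
    (w : Equiv.Perm (Fin n)) (n₀ : Matrix (Fin n) (Fin n) F) (hn₀ : IsN0 p F n₀)
    (r b : Matrix (Fin n) (Fin n) F) (hr : r ∈ Rw p F π n w) (hb : IsBorel F b) :
    ∃ (r' b' : Matrix (Fin n) (Fin n) F),
      r' ∈ Rw p F π n w ∧ IsBorel F b' ∧ n₀ * (r * b) = r' * b' := by
  have hπ' := inv_not_mem_oF_of_unit_mul_zpow p F hπ hunif
  obtain ⟨b₀, hb₀, hmem⟩ := ((isRwCongruent_of_mem_Rw hπ hr).isN0_mul hn₀).exists_isBorel_mul_mem_Rw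
    fun _ => ne_zero_and_inv_mem_oF_of_sub_one_mem_piO hπ hπ' hunif
  refine ⟨n₀ * r * b₀, b₀⁻¹ * b, hmem, hb₀.inv.mul hb, ?_⟩
  rw [mul_assoc, mul_nonsing_inv_cancel_left _ _ hb₀.isUnit_det, mul_assoc]
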